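/- arXiv:2508.20628 — 2 statements merged into one kernel-verified Lean document; each statement's English description precedes it below -/
import Mathlib

section
/- Let G be a group. The linear subspace L(G) = span{g − g⁻¹ | g ∈ G} of the complex group algebra ℂG is closed under the commutator bracket [a,b] = ab − ba; hence L(G) is a Lie subalgebra of ℂG (the Plesken Lie algebra of G). -/
/-!
Writing `d g = g - g⁻¹` (`pleskenGen`), bilinearity of the bracket reduces the claim to
generators, and there `⁅d g, d h⁆ = d (g h) - d (g h⁻¹) - d (g⁻¹ h) + d (g⁻¹ h⁻¹)`:
the terms of `d h * d g` are the inverses of those of `d g * d h`, with the same signs.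
-/

open Submodule in
theorem lie_mem_span_of_forall_lie_mem_span {R L : Type*} [CommRing R] [LieRing L]
    [LieAlgebra R L] {s : Set L} (hs : ∀ a ∈ s, ∀ b ∈ s, ⁅a, b⁆ ∈ span R s)
    {x y : L} (hx : x ∈ span R s) (hy : y ∈ span R s) : ⁅x, y⁆ ∈ span R s := by
  induction hx, hy using span_induction₂ with
  | mem_mem a b ha hb => exact hs a ha b hb
  | zero_left b _ => simp
  | zero_right a _ => simp
  | add_left a b c _ _ _ ha hb => simpa only [add_lie] using add_mem ha hb
  | add_right a b c _ _ _ hb hc => simpa only [lie_add] using add_mem hb hc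
  | smul_left r a b _ _ h => simpa only [smul_lie] using smul_mem _ r h
  | smul_right r a b _ _ h => simpa only [lie_smul] using smul_mem _ r h

namespace MonoidAlgebra

attribute [local instance] LieRing.ofAssociativeRing

variable (k : Type*) {G : Type*} [CommRing k] [Group G]

noncomputable def pleskenGen (g : G) : MonoidAlgebra k G := of k G g - of k G g⁻¹

theorem lie_pleskenGen (g h : G) :
    ⁅pleskenGen k g, pleskenGen k h⁆ =
      pleskenGen k (g * h) - pleskenGen k (g * h⁻¹) - pleskenGen k (g⁻¹ * h)
        + pleskenGen k (g⁻¹ * h⁻¹) := by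
  simp only [pleskenGen, Ring.lie_def, sub_mul, mul_sub, ← map_mul, mul_inv_rev, inv_inv]
  abel

theorem lie_pleskenGen_mem_span (g h : G) :
    ⁅pleskenGen k g, pleskenGen k h⁆ ∈ Submodule.span k (Set.range (pleskenGen k)) := by
  have hmem (x : G) : pleskenGen k x ∈ Submodule.span k (Set.range (pleskenGen k)) :=
    Submodule.subset_span ⟨x, rfl⟩
  rw [lie_pleskenGen]
  exact add_mem (sub_mem (sub_mem (hmem _) (hmem _)) (hmem _)) (hmem _)

theorem lie_mem_span_pleskenGen {x y : MonoidAlgebra k G}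
    (hx : x ∈ Submodule.span k (Set.range (pleskenGen k)))
    (hy : y ∈ Submodule.span k (Set.range (pleskenGen k))) :
    ⁅x, y⁆ ∈ Submodule.span k (Set.range (pleskenGen k)) := by
  refine lie_mem_span_of_forall_lie_mem_span ?_ hx hy
  rintro - ⟨g, rfl⟩ - ⟨h, rfl⟩
  exact lie_pleskenGen_mem_span k g h

end MonoidAlgebra

/-- The Plesken Lie algebra `L(G) = span {g - g⁻¹ | g ∈ G}` inside the complex group
algebra `ℂG` is closed under the commutator bracket, i.e. it is a Lie subalgebra. -/
theorem stmt3 {G : Type*} [Group G] :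
    ∀ x ∈ Submodule.span ℂ
        {z : MonoidAlgebra ℂ G | ∃ g : G, z = MonoidAlgebra.of ℂ G g - MonoidAlgebra.of ℂ G g⁻¹},
      ∀ y ∈ Submodule.span ℂ
          {z : MonoidAlgebra ℂ G | ∃ g : G, z = MonoidAlgebra.of ℂ G g - MonoidAlgebra.of ℂ G g⁻¹},
        ⁅x, y⁆ ∈ Submodule.span ℂ
          {z : MonoidAlgebra ℂ G | ∃ g : G, z = MonoidAlgebra.of ℂ G g - MonoidAlgebra.of ℂ G g⁻¹} := by
  have hset :
      {z : MonoidAlgebra ℂ G | ∃ g : G, z = MonoidAlgebra.of ℂ G g - MonoidAlgebra.of ℂ G g⁻¹} =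
        Set.range (MonoidAlgebra.pleskenGen ℂ) := by
    ext z
    exact exists_congr fun g => eq_comm
  rw [hset]
  exact fun x hx y hy => MonoidAlgebra.lie_mem_span_pleskenGen ℂ hx hy
end

section
/- Let L be a 4-dimensional complex Lie algebra with basis b₁, b₂, b₃, b₄ whose Lie bracket satisfies [b₁, b₂] = −b₁ − b₂, [b₁, b₃] = b₃ − b₄, [b₂, b₃] = −b₃ − b₄, and [bᵢ, b₄] = 0 for i = 1, 2, 3. Then the derived series of L is L' = span(b₁ + b₂, b₃, b₄), L'' = span(b₄), L''' = 0; in particular L is solvable of derived length 3. -/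
/-!
If a Lie ideal is spanned by vectors `vᵢ`, its derived ideal is spanned by the brackets
`⁅vᵢ, vⱼ⁆` with `i < j`. For `L` these brackets are `-(b₁ + b₂)`, `b₃ - b₄`, `-b₃ - b₄` and `0`,
which span `⟨b₁ + b₂, b₃, b₄⟩`; on that basis the only nonzero bracket is
`⁅b₁ + b₂, b₃⁆ = -2 b₄`, so `L'' = ⟨b₄⟩`, and a one-dimensional ideal has zero derived ideal.
-/

open Set Submodule

namespace LieSubmodule

variable {R L M : Type*} [CommRing R] [LieRing L] [LieAlgebra R L]
  [AddCommGroup M] [Module R M] [LieRingModule L M] [LieModule R L M]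

theorem toSubmodule_lie_eq_span_image2 {I : LieIdeal R L} {N : LieSubmodule R L M}
    {s : Set L} {t : Set M} (hI : I.toSubmodule = span R s) (hN : N.toSubmodule = span R t) :
    (⁅I, N⁆ : LieSubmodule R L M).toSubmodule = span R (image2 (⁅·, ·⁆) s t) := by
  have h := map₂_span_span R (LieModule.toEnd R L M : L →ₗ[R] Module.End R M) s t
  rw [← hI, ← hN, map₂_eq_span_image2] at h
  simpa [lieIdeal_oper_eq_linear_span', image2] using h

end LieSubmodule

namespace LieIdeal

variable {R L : Type*} [CommRing R] [LieRing L] [LieAlgebra R L]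

theorem toSubmodule_lie_self_le_of_span_range {ι : Type*} [LinearOrder ι] {I : LieIdeal R L}
    {v : ι → L} (hI : I.toSubmodule = span R (range v)) {p : Submodule R L}
    (h : ∀ i j, i < j → ⁅v i, v j⁆ ∈ p) : (⁅I, I⁆ : LieIdeal R L).toSubmodule ≤ p := by
  rw [LieSubmodule.toSubmodule_lie_eq_span_image2 hI hI, span_le]
  rintro _ ⟨_, ⟨i, rfl⟩, _, ⟨j, rfl⟩, rfl⟩
  show ⁅v i, v j⁆ ∈ p
  rcases lt_trichotomy i j with hij | rfl | hji
  · exact h i j hij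
  · simp
  · rw [← lie_skew]; exact p.neg_mem (h j i hji)

theorem lie_self_eq_bot_of_toSubmodule_eq_span_singleton {I : LieIdeal R L} {x : L}
    (hI : I.toSubmodule = span R {x}) : ⁅I, I⁆ = ⊥ := by
  rw [← LieSubmodule.toSubmodule_eq_bot, LieSubmodule.toSubmodule_lie_eq_span_image2 hI hI]
  simp

end LieIdeal

open LieAlgebra

section

variable {K L : Type*} [Field K] [LieRing L] [LieAlgebra K L] (b : Module.Basis (Fin 4) K L)

theorem basis_three_eq_inv_smul_lie [NeZero (2 : K)] (h13 : ⁅b 0, b 2⁆ = b 2 - b 3)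
    (h23 : ⁅b 1, b 2⁆ = -b 2 - b 3) : b 3 = (-2 : K)⁻¹ • ⁅b 0 + b 1, b 2⁆ := by
  rw [add_lie, h13, h23, eq_inv_smul_iff₀ (neg_ne_zero.2 two_ne_zero)]
  module

theorem toSubmodule_derivedSeries_one_eq [NeZero (2 : K)] (h12 : ⁅b 0, b 1⁆ = -b 0 - b 1)
    (h13 : ⁅b 0, b 2⁆ = b 2 - b 3) (h23 : ⁅b 1, b 2⁆ = -b 2 - b 3) (h14 : ⁅b 0, b 3⁆ = 0)
    (h24 : ⁅b 1, b 3⁆ = 0) (h34 : ⁅b 2, b 3⁆ = 0) :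
    (derivedSeries K L 1).toSubmodule = span K {b 0 + b 1, b 2, b 3} := by
  refine le_antisymm ?_ ?_
  · refine LieIdeal.toSubmodule_lie_self_le_of_span_range (v := b) (by simp [b.span_eq]) ?_
    intro i j hij
    fin_cases i <;> fin_cases j <;> try exact absurd hij (by decide)
    all_goals simp only [Fin.zero_eta, Fin.mk_one, Fin.reduceFinMk]
    · exact mem_span_triple.2 ⟨-1, 0, 0, by rw [h12]; module⟩
    · exact mem_span_triple.2 ⟨0, 1, -1, by rw [h13]; module⟩
    · simp [h14]
    · exact mem_span_triple.2 ⟨0, -1, -1, by rw [h23]; module⟩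
    · simp [h24]
    · simp [h34]
  · have hmem (x y : L) : ⁅x, y⁆ ∈ derivedSeries K L 1 :=
      LieSubmodule.lie_mem_lie (LieSubmodule.mem_top x) (LieSubmodule.mem_top y)
    have h3 : b 3 ∈ derivedSeries K L 1 := by
      rw [basis_three_eq_inv_smul_lie b h13 h23]; exact smul_mem _ _ (hmem _ _)
    have h21 : ⁅b 1, b 0⁆ = b 0 + b 1 := by rw [← lie_skew, h12]; abel
    have h2 : b 2 = ⁅b 0, b 2⁆ + b 3 := by rw [h13]; abel
    rw [span_le]
    rintro _ (rfl | rfl | rfl)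
    · exact h21 ▸ hmem _ _
    · exact h2 ▸ add_mem (hmem _ _) h3
    · exact h3

theorem toSubmodule_derivedSeries_two_eq [NeZero (2 : K)] (h13 : ⁅b 0, b 2⁆ = b 2 - b 3)
    (h23 : ⁅b 1, b 2⁆ = -b 2 - b 3) (h14 : ⁅b 0, b 3⁆ = 0) (h24 : ⁅b 1, b 3⁆ = 0)
    (h34 : ⁅b 2, b 3⁆ = 0)
    (hD : (derivedSeries K L 1).toSubmodule = span K {b 0 + b 1, b 2, b 3}) :
    (derivedSeries K L 2).toSubmodule = span K {b 3} := by
  refine le_antisymm ?_ ?_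
  · refine LieIdeal.toSubmodule_lie_self_le_of_span_range (I := derivedSeries K L 1)
      (v := ![b 0 + b 1, b 2, b 3])
      (by rwa [Matrix.range_cons, Matrix.range_cons, Matrix.range_cons, Matrix.range_empty,
        union_empty, singleton_union, singleton_union]) ?_
    intro i j hij
    fin_cases i <;> fin_cases j <;> try exact absurd hij (by decide)
    all_goals simp only [Fin.zero_eta, Fin.mk_one, Fin.reduceFinMk, Matrix.cons_val_zero,
      Matrix.cons_val_one, Matrix.cons_val_two]
    · exact mem_span_singleton.2 ⟨-2, by rw [add_lie, h13, h23]; module⟩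
    · simp [h14, h24]
    · simp [h34]
  · have hmem {x : L} (hx : x ∈ span K {b 0 + b 1, b 2, b 3}) : x ∈ derivedSeries K L 1 := by
      rwa [← LieSubmodule.mem_toSubmodule, hD]
    rw [span_le, singleton_subset_iff, basis_three_eq_inv_smul_lie b h13 h23]
    exact smul_mem _ _ (LieSubmodule.lie_mem_lie (hmem (subset_span (by simp)))
      (hmem (subset_span (by simp))))

end

/-- A 4-dimensional complex Lie algebra with basis `b₁, b₂, b₃, b₄` and brackets
`[b₁,b₂] = -b₁-b₂`, `[b₁,b₃] = b₃-b₄`, `[b₂,b₃] = -b₃-b₄`, `[bᵢ,b₄] = 0` has derived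
series `L' = span(b₁+b₂, b₃, b₄)`, `L'' = span(b₄)`, `L''' = 0`; in particular it is
solvable of derived length 3. -/
theorem stmt14 {L : Type*} [LieRing L] [LieAlgebra ℂ L]
    (b : Module.Basis (Fin 4) ℂ L)
    (h12 : ⁅b 0, b 1⁆ = -b 0 - b 1)
    (h13 : ⁅b 0, b 2⁆ = b 2 - b 3)
    (h23 : ⁅b 1, b 2⁆ = -b 2 - b 3)
    (h14 : ⁅b 0, b 3⁆ = 0)
    (h24 : ⁅b 1, b 3⁆ = 0)
    (h34 : ⁅b 2, b 3⁆ = 0) :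
    (LieAlgebra.derivedSeries ℂ L 1).toSubmodule =
        Submodule.span ℂ {b 0 + b 1, b 2, b 3} ∧
    (LieAlgebra.derivedSeries ℂ L 2).toSubmodule = Submodule.span ℂ {b 3} ∧
    LieAlgebra.derivedSeries ℂ L 3 = ⊥ ∧
    LieAlgebra.IsSolvable L ∧
    LieAlgebra.derivedSeries ℂ L 2 ≠ ⊥ := by
  have hD1 := toSubmodule_derivedSeries_one_eq b h12 h13 h23 h14 h24 h34
  have hD2 := toSubmodule_derivedSeries_two_eq b h13 h23 h14 h24 h34 hD1
  have hD3 : derivedSeries ℂ L 3 = ⊥ :=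
    LieIdeal.lie_self_eq_bot_of_toSubmodule_eq_span_singleton (I := derivedSeries ℂ L 2) hD2
  refine ⟨hD1, hD2, hD3, .mk hD3, fun h ↦ b.ne_zero 3 ?_⟩
  have hb3 : b 3 ∈ (derivedSeries ℂ L 2).toSubmodule := hD2 ▸ mem_span_singleton_self _
  rwa [h, LieSubmodule.bot_toSubmodule, mem_bot] at hb3
end
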